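/- Let d ≥ 1, β ≥ 0, S ≥ 1 and M > 0, let E be a nonempty finite index set, and for each e ∈ E let ψ_e : ℝ^d → ℝ be measurable with |ψ_e(x)| ≤ M for all x and ψ_e(x) = 0 for x ∉ [0,S]^d; define ψ_{j,k,e}(x) := 2^{jd/2} ψ_e(2^j x − k) for j ∈ ℕ, k ∈ ℤ^d, e ∈ E. Let H be a real Hilbert space, T : L²(ℝ^d) → H a bounded linear map, and suppose there exist elements u_{j,k,e} ∈ H such that ⟨T g, u_{j,k,e}⟩_H = 2^{−jβ} ⟨g, ψ_{j,k,e}⟩_{L²} for every g ∈ L²(ℝ^d) and every (j,k,e). Let n ≥ 2 be a natural number and set J := ⌈(log₂ n)/d⌉. If h ∈ L²(ℝ^d) ∩ L^∞(ℝ^d) satisfies |⟨T h, u_{j,k,e}⟩_H| ≤ η for all j ≤ J, k ∈ ℤ^d, e ∈ E, then sup_{j ∈ ℕ, k ∈ ℤ^d, e ∈ E} 2^{−jβ} |⟨h, ψ_{j,k,e}⟩_{L²}| ≤ η + S^d · M · ‖h‖_{L^∞} · n^{−1/2}. -/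

import Mathlib

/-! At the scales `j ≤ ⌈log₂ n / d⌉` the vaguelette relation turns the constraint on
`⟨T h, u_{j,k,e}⟩` into the bound `η` on the coefficient. At finer scales the atom `ψ_{j,k,e}` is
bounded by `2^{jd/2} M` and vanishes off a dyadic box of volume `(S 2^{-j})^d`, so
`|⟨h, ψ_{j,k,e}⟩| ≤ S^d M ‖h‖_∞ 2^{-jd/2}`, and there `2^{jd} ≥ n`. -/

open MeasureTheory Set
open scoped ENNReal

noncomputable def waveletAtom {d : ℕ} (ψ : (Fin d → ℝ) → ℝ) (j : ℕ) (k : Fin d → ℤ)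
    (x : Fin d → ℝ) : ℝ :=
  (2 : ℝ) ^ ((j : ℝ) * d / 2) * ψ fun i => 2 ^ j * x i - k i

def dyadicBox {d : ℕ} (S : ℝ) (j : ℕ) (k : Fin d → ℤ) : Set (Fin d → ℝ) :=
  Icc (fun i => k i / 2 ^ j) (fun i => (k i + S) / 2 ^ j)

theorem abs_integral_mul_le_of_eq_zero_off {α : Type*} [MeasurableSpace α] {μ : Measure α}
    {s : Set α} {f g : α → ℝ} {C B : ℝ} (hs : μ s < ∞) (hf : ∀ᵐ x ∂μ, |f x| ≤ C)
    (hg : ∀ x, |g x| ≤ B) (hg0 : ∀ x ∉ s, g x = 0) :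
    |∫ x, f x * g x ∂μ| ≤ C * B * μ.real s := by
  rw [← setIntegral_eq_integral_of_forall_compl_eq_zero (μ := μ) fun x hx => by simp [hg0 x hx],
    ← Real.norm_eq_abs]
  refine norm_setIntegral_le_of_norm_le_const_ae' hs ?_
  filter_upwards [hf] with x hfx _
  rw [Real.norm_eq_abs, abs_mul]
  exact mul_le_mul hfx (hg x) (abs_nonneg _) ((abs_nonneg _).trans hfx)

theorem two_rpow_half_mul_div_pow (S : ℝ) (j d : ℕ) :
    (2 : ℝ) ^ ((j : ℝ) * d / 2) * (S / 2 ^ j) ^ d =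
      S ^ d * ((2 : ℝ) ^ (j * d)) ^ (-(1 : ℝ) / 2) := by
  rw [div_pow, ← pow_mul, ← Real.rpow_natCast, ← Real.rpow_natCast 2,
    ← Real.rpow_mul (by norm_num)]
  rw [mul_div_assoc', mul_comm, mul_div_assoc, ← Real.rpow_sub (by norm_num)]
  push_cast
  ring_nf

theorem natCast_le_two_pow_of_ceil_logb_div_lt {n d j : ℕ} (hd : 0 < d) (hn : 0 < n)
    (hj : ⌈Real.logb 2 n / d⌉₊ < j) : (n : ℝ) ≤ 2 ^ (j * d) := by
  have hlog : Real.logb 2 n < (j * d : ℕ) := by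
    have := (Nat.le_ceil (Real.logb 2 n / d)).trans_lt (Nat.cast_lt.2 hj)
    push_cast
    rwa [div_lt_iff₀ (by positivity)] at this
  rw [Real.logb_lt_iff_lt_rpow one_lt_two (by positivity), Real.rpow_natCast] at hlog
  exact hlog.le

section WaveletAtom

variable {d : ℕ} {ψ : (Fin d → ℝ) → ℝ} {S M : ℝ}

theorem abs_waveletAtom_le (hbd : ∀ x, |ψ x| ≤ M) (j : ℕ) (k : Fin d → ℤ) (x : Fin d → ℝ) :
    |waveletAtom ψ j k x| ≤ 2 ^ ((j : ℝ) * d / 2) * M := by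
  rw [waveletAtom, abs_mul, abs_of_pos (by positivity)]
  exact mul_le_mul_of_nonneg_left (hbd _) (by positivity)

theorem waveletAtom_eq_zero_of_notMem_dyadicBox
    (hsupp : ∀ x ∉ Icc (0 : Fin d → ℝ) (fun _ => S), ψ x = 0) (j : ℕ) (k : Fin d → ℤ)
    {x : Fin d → ℝ} (hx : x ∉ dyadicBox S j k) :
    waveletAtom ψ j k x = 0 := by
  refine mul_eq_zero_of_right _ (hsupp _ fun hmem => hx ⟨fun i => ?_, fun i => ?_⟩)
  · rw [div_le_iff₀ (by positivity)]
    linarith [show (0 : ℝ) ≤ 2 ^ j * x i - k i from hmem.1 i]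
  · rw [le_div_iff₀ (by positivity)]
    linarith [show 2 ^ j * x i - k i ≤ S from hmem.2 i]

theorem volume_real_dyadicBox (hS : 0 ≤ S) (j : ℕ) (k : Fin d → ℤ) :
    volume.real (dyadicBox S j k) = (S / 2 ^ j) ^ d := by
  rw [dyadicBox, measureReal_def, Real.volume_Icc_pi_toReal fun i => by gcongr; linarith]
  simp [← sub_div, div_pow]

theorem abs_integral_mul_waveletAtom_le {C : ℝ} (hS : 0 ≤ S) (hbd : ∀ x, |ψ x| ≤ M)
    (hsupp : ∀ x ∉ Icc (0 : Fin d → ℝ) (fun _ => S), ψ x = 0) {h : (Fin d → ℝ) → ℝ}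
    (hh : ∀ᵐ x, |h x| ≤ C) (j : ℕ) (k : Fin d → ℤ) :
    |∫ x, h x * waveletAtom ψ j k x| ≤ S ^ d * M * C * ((2 : ℝ) ^ (j * d)) ^ (-(1 : ℝ) / 2) :=
  calc |∫ x, h x * waveletAtom ψ j k x|
      ≤ C * (2 ^ ((j : ℝ) * d / 2) * M) * volume.real (dyadicBox S j k) :=
        abs_integral_mul_le_of_eq_zero_off isCompact_Icc.measure_lt_top hh
          (abs_waveletAtom_le hbd j k)
          fun _ hx => waveletAtom_eq_zero_of_notMem_dyadicBox hsupp j k hx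
    _ = S ^ d * M * C * ((2 : ℝ) ^ (j * d)) ^ (-(1 : ℝ) / 2) := by
        rw [volume_real_dyadicBox hS]
        linear_combination C * M * two_rpow_half_mul_div_pow S j d

end WaveletAtom

theorem besov_norm_bound_from_vaguelette_constraint_general
    (d : ℕ) (hd : 1 ≤ d) (β : ℝ) (hβ : 0 ≤ β)
    (S M : ℝ) (hS : 1 ≤ S) (hM : 0 < M)
    {E : Type*}
    (ψ : E → (Fin d → ℝ) → ℝ)
    (hbd : ∀ e x, |ψ e x| ≤ M)
    (hsupp : ∀ e x, x ∉ Set.Icc (0 : Fin d → ℝ) (fun _ => S) → ψ e x = 0)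
    {H : Type*} [NormedAddCommGroup H] [InnerProductSpace ℝ H]
    (T : Lp ℝ 2 (volume : Measure (Fin d → ℝ)) →L[ℝ] H)
    (u : ℕ → (Fin d → ℤ) → E → H)
    (hvag : ∀ (j : ℕ) (k : Fin d → ℤ) (e : E)
        (g : Lp ℝ 2 (volume : Measure (Fin d → ℝ))),
      (inner ℝ (T g) (u j k e) : ℝ)
        = (2 : ℝ) ^ (-(j : ℝ) * β) *
            ∫ x : Fin d → ℝ,
              g x * ((2 : ℝ) ^ ((j : ℝ) * d / 2) * ψ e fun i => 2 ^ j * x i - k i))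
    (n : ℕ) (hn : 2 ≤ n)
    (h : (Fin d → ℝ) → ℝ) (hh2 : MemLp h 2 volume) (hhTop : MemLp h ⊤ volume)
    (η : ℝ)
    (hconstraint : ∀ j : ℕ, j ≤ ⌈Real.logb 2 n / d⌉₊ → ∀ (k : Fin d → ℤ) (e : E),
      |(inner ℝ (T (hh2.toLp h)) (u j k e) : ℝ)| ≤ η) :
    ∀ (j : ℕ) (k : Fin d → ℤ) (e : E),
      (2 : ℝ) ^ (-(j : ℝ) * β) *
          |∫ x : Fin d → ℝ,
              h x * ((2 : ℝ) ^ ((j : ℝ) * d / 2) * ψ e fun i => 2 ^ j * x i - k i)|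
        ≤ η + S ^ d * M * (eLpNorm h ⊤ volume).toReal * (n : ℝ) ^ (-(1 : ℝ) / 2) := by
  intro j k e
  set C := (eLpNorm h ⊤ volume).toReal
  have hC : ∀ᵐ x, |h x| ≤ C := by
    simpa [C, toReal_eLpNorm hhTop.1] using ae_le_lpNorm_exponent_top hhTop
  have hn0 : (0 : ℝ) < n := Nat.cast_pos.2 (by omega)
  have hη : 0 ≤ η := (abs_nonneg _).trans (hconstraint 0 (Nat.zero_le _) k e)
  have htail : 0 ≤ S ^ d * M * C * (n : ℝ) ^ (-(1 : ℝ) / 2) := by positivity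
  rcases le_or_gt j ⌈Real.logb 2 n / d⌉₊ with hj | hj
  · have hcoeff := hconstraint j hj k e
    rw [hvag, integral_congr_ae (hh2.coeFn_toLp.mono fun x hx => by rw [hx]), abs_mul,
      abs_of_pos (by positivity)] at hcoeff
    linarith
  · calc (2 : ℝ) ^ (-(j : ℝ) * β) * |∫ x, h x * waveletAtom (ψ e) j k x|
        ≤ 1 * |∫ x, h x * waveletAtom (ψ e) j k x| :=
          mul_le_mul_of_nonneg_right
            (Real.rpow_le_one_of_one_le_of_nonpos one_le_two (by nlinarith)) (abs_nonneg _)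
      _ ≤ S ^ d * M * C * ((2 : ℝ) ^ (j * d)) ^ (-(1 : ℝ) / 2) := by
          rw [one_mul]
          exact abs_integral_mul_waveletAtom_le (by linarith) (hbd e) (hsupp e) hC j k
      _ ≤ S ^ d * M * C * (n : ℝ) ^ (-(1 : ℝ) / 2) :=
          mul_le_mul_of_nonneg_left (Real.rpow_le_rpow_of_nonpos hn0
            (natCast_le_two_pow_of_ceil_logb_div_lt hd (by omega) hj) (by norm_num))
            (by positivity)
      _ ≤ _ := le_add_of_nonneg_left hη

/-- Deterministic core of part (i) of Proposition 5 of the paper: if `T` has a vaguelette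
system `u_{j,k,e}` with `⟨Tg, u_{j,k,e}⟩ = 2^{-jβ} ⟨g, ψ_{j,k,e}⟩` for all `g ∈ L²`, and
`h ∈ L² ∩ L^∞` satisfies `|⟨Th, u_{j,k,e}⟩| ≤ η` for all scales `j ≤ J := ⌈(log₂ n)/d⌉`,
then the Besov `B^{-d/2-β}_{∞,∞}` coefficients of `h` satisfy
`2^{-jβ} |⟨h, ψ_{j,k,e}⟩| ≤ η + S^d M ‖h‖_{L^∞} n^{-1/2}` for all `j, k, e`. -/
theorem besov_norm_bound_from_vaguelette_constraint
    (d : ℕ) (hd : 1 ≤ d) (β : ℝ) (hβ : 0 ≤ β)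
    (S M : ℝ) (hS : 1 ≤ S) (hM : 0 < M)
    {E : Type*} [Fintype E] [Nonempty E]
    (ψ : E → (Fin d → ℝ) → ℝ)
    (hmeas : ∀ e, Measurable (ψ e))
    (hbd : ∀ e x, |ψ e x| ≤ M)
    (hsupp : ∀ e x, x ∉ Set.Icc (0 : Fin d → ℝ) (fun _ => S) → ψ e x = 0)
    {H : Type*} [NormedAddCommGroup H] [InnerProductSpace ℝ H]
    (T : Lp ℝ 2 (volume : Measure (Fin d → ℝ)) →L[ℝ] H)
    (u : ℕ → (Fin d → ℤ) → E → H)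
    (hvag : ∀ (j : ℕ) (k : Fin d → ℤ) (e : E)
        (g : Lp ℝ 2 (volume : Measure (Fin d → ℝ))),
      (inner ℝ (T g) (u j k e) : ℝ)
        = (2 : ℝ) ^ (-(j : ℝ) * β) *
            ∫ x : Fin d → ℝ,
              g x * ((2 : ℝ) ^ ((j : ℝ) * d / 2) * ψ e fun i => 2 ^ j * x i - k i))
    (n : ℕ) (hn : 2 ≤ n)
    (h : (Fin d → ℝ) → ℝ) (hh2 : MemLp h 2 volume) (hhTop : MemLp h ⊤ volume)
    (η : ℝ)
    (hconstraint : ∀ j : ℕ, j ≤ ⌈Real.logb 2 n / d⌉₊ → ∀ (k : Fin d → ℤ) (e : E),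
      |(inner ℝ (T (hh2.toLp h)) (u j k e) : ℝ)| ≤ η) :
    ∀ (j : ℕ) (k : Fin d → ℤ) (e : E),
      (2 : ℝ) ^ (-(j : ℝ) * β) *
          |∫ x : Fin d → ℝ,
              h x * ((2 : ℝ) ^ ((j : ℝ) * d / 2) * ψ e fun i => 2 ^ j * x i - k i)|
        ≤ η + S ^ d * M * (eLpNorm h ⊤ volume).toReal * (n : ℝ) ^ (-(1 : ℝ) / 2) :=
  besov_norm_bound_from_vaguelette_constraint_general d hd β hβ S M hS hM ψ hbd hsupp T u hvag n hn
    h hh2 hhTop η hconstraint
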